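/- arXiv:2404.18780 — 5 statements merged into one kernel-verified Lean document; each statement's English description precedes it below -/
import Mathlib

section
/- Let λ ∈ ℝ with λ ≠ 0, T > 0, B > 0, and let w : [0,T] → ℝ be measurable with w(t) > 0 for almost every t, with t ↦ e^{λ(T−t)}·w(t) integrable and ∫₀ᵀ w(t)^{−2} dt ≤ B. Then ∫₀ᵀ e^{λ(T−t)}·w(t) dt ≥ B^{−1/2}·( 3(e^{2λT/3} − 1)/(2λ) )^{3/2}. -/
open MeasureTheory Set

/-!
Write `e^{2λ(T-t)/3} = (e^{λ(T-t)} w)^{2/3} (w^{-2})^{1/3}` and apply Hölder's inequality with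
exponents `3/2` and `3`: `∫₀ᵀ e^{2λ(T-t)/3} ≤ (∫₀ᵀ e^{λ(T-t)} w)^{2/3} B^{1/3}`. The left side is
`3(e^{2λT/3} - 1)/(2λ)`; raising to the power `3/2` gives the bound, with equality for
`w ∝ e^{-λ(T-t)/3}`.
-/

theorem integral_exp_mul_sub {a : ℝ} (ha : a ≠ 0) (T : ℝ) :
    ∫ t in (0:ℝ)..T, Real.exp (a * (T - t)) = (Real.exp (a * T) - 1) / a := by
  rw [intervalIntegral.integral_comp_sub_left (fun s => Real.exp (a * s)),
    intervalIntegral.integral_comp_mul_left Real.exp ha, integral_exp]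
  simp only [sub_self, sub_zero, mul_zero, Real.exp_zero, smul_eq_mul]
  field_simp

section Budget

variable {α : Type*} [MeasurableSpace α] {μ : Measure α} {u w : α → ℝ} {B : ℝ}

theorem integral_rpow_two_thirds_le_of_lintegral_inv_sq_le (hw : Measurable w)
    (hu : 0 ≤ᵐ[μ] u) (hw_pos : ∀ᵐ x ∂μ, 0 < w x)
    (hu_int : Integrable (fun x => u x ^ (2/3 : ℝ)) μ)
    (huw_int : Integrable (fun x => u x * w x) μ) (hB : 0 ≤ B)
    (hbudget : ∫⁻ x, ENNReal.ofReal ((w x ^ 2)⁻¹) ∂μ ≤ ENNReal.ofReal B) :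
    ∫ x, u x ^ (2/3 : ℝ) ∂μ ≤ (∫ x, u x * w x ∂μ) ^ (2/3 : ℝ) * B ^ (1/3 : ℝ) := by
  have huw_nonneg : 0 ≤ᵐ[μ] fun x => u x * w x := by
    filter_upwards [hu, hw_pos] with x hux hwx using mul_nonneg hux hwx.le
  have hfactor : ∀ᵐ x ∂μ, ENNReal.ofReal (u x ^ (2/3 : ℝ)) =
      ENNReal.ofReal (u x * w x) ^ (2/3 : ℝ) * ENNReal.ofReal ((w x ^ 2)⁻¹) ^ (1/3 : ℝ) := by
    filter_upwards [hu, hw_pos] with x hux hwx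
    rw [ENNReal.ofReal_rpow_of_nonneg (mul_nonneg hux hwx.le) (by norm_num),
      ENNReal.ofReal_rpow_of_nonneg (by positivity) (by norm_num),
      ← ENNReal.ofReal_mul (Real.rpow_nonneg (mul_nonneg hux hwx.le) _), Real.mul_rpow hux hwx.le,
      mul_assoc]
    congr 2
    rw [← Real.rpow_natCast, ← Real.rpow_neg_one, ← Real.rpow_mul hwx.le,
      ← Real.rpow_mul hwx.le, ← Real.rpow_add hwx]
    norm_num
  have holder : ENNReal.ofReal (∫ x, u x ^ (2/3 : ℝ) ∂μ) ≤
      ENNReal.ofReal (∫ x, u x * w x ∂μ) ^ (2/3 : ℝ) * ENNReal.ofReal B ^ (1/3 : ℝ) := by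
    rw [ofReal_integral_eq_lintegral_ofReal hu_int
        (hu.mono fun x hx => Real.rpow_nonneg hx _), lintegral_congr_ae hfactor,
      ofReal_integral_eq_lintegral_ofReal huw_int huw_nonneg]
    refine (ENNReal.lintegral_mul_norm_pow_le huw_int.aemeasurable.ennreal_ofReal
      (hw.pow_const 2).inv.ennreal_ofReal.aemeasurable (by norm_num) (by norm_num)
      (by norm_num)).trans ?_
    gcongr
    exact hbudget
  have hI : 0 ≤ ∫ x, u x * w x ∂μ := integral_nonneg_of_ae huw_nonneg
  rwa [ENNReal.ofReal_rpow_of_nonneg hI (by norm_num),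
    ENNReal.ofReal_rpow_of_nonneg hB (by norm_num), ← ENNReal.ofReal_mul (by positivity),
    ENNReal.ofReal_le_ofReal_iff (by positivity)] at holder

theorem rpow_le_integral_mul_of_lintegral_inv_sq_le (hw : Measurable w)
    (hu : 0 ≤ᵐ[μ] u) (hw_pos : ∀ᵐ x ∂μ, 0 < w x)
    (hu_int : Integrable (fun x => u x ^ (2/3 : ℝ)) μ)
    (huw_int : Integrable (fun x => u x * w x) μ) (hB : 0 < B)
    (hbudget : ∫⁻ x, ENNReal.ofReal ((w x ^ 2)⁻¹) ∂μ ≤ ENNReal.ofReal B) :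
    B ^ (-(1:ℝ)/2) * (∫ x, u x ^ (2/3 : ℝ) ∂μ) ^ ((3:ℝ)/2) ≤ ∫ x, u x * w x ∂μ := by
  set I := ∫ x, u x * w x ∂μ
  set J := ∫ x, u x ^ (2/3 : ℝ) ∂μ
  have hI : 0 ≤ I := integral_nonneg_of_ae <| by
    filter_upwards [hu, hw_pos] with x hux hwx using mul_nonneg hux hwx.le
  have hJ : 0 ≤ J := integral_nonneg_of_ae (hu.mono fun x hx => Real.rpow_nonneg hx _)
  have hholder : J ≤ I ^ (2/3 : ℝ) * B ^ (1/3 : ℝ) :=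
    integral_rpow_two_thirds_le_of_lintegral_inv_sq_le hw hu hw_pos hu_int huw_int hB.le hbudget
  calc B ^ (-(1:ℝ)/2) * J ^ ((3:ℝ)/2)
      ≤ B ^ (-(1:ℝ)/2) * (I ^ (2/3 : ℝ) * B ^ (1/3 : ℝ)) ^ ((3:ℝ)/2) := by gcongr
    _ = I := by
      rw [Real.mul_rpow (by positivity) (by positivity), ← Real.rpow_mul hI,
        ← Real.rpow_mul hB.le, mul_left_comm, ← Real.rpow_add hB]
      norm_num

end Budget

/-- Under the computational budget `∫₀ᵀ (w t)⁻² dt ≤ B` (Lebesgue integral,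
possibly infinite, hence stated via `lintegral`), the final-time error satisfies
`∫₀ᵀ e^{λ(T−t)} w t dt ≥ B^{−1/2} (3(e^{2λT/3} − 1)/(2λ))^{3/2}`. -/
theorem stmt_2 (lam T B : ℝ) (hlam : lam ≠ 0) (hT : 0 < T) (hB : 0 < B)
    (w : ℝ → ℝ) (hmeas : Measurable w)
    (hpos : ∀ᵐ t ∂(volume.restrict (Icc (0:ℝ) T)), 0 < w t)
    (hint : IntegrableOn (fun t => Real.exp (lam * (T - t)) * w t) (Icc 0 T))
    (hbudget : (∫⁻ t in Icc (0:ℝ) T, ENNReal.ofReal ((w t ^ 2)⁻¹)) ≤ ENNReal.ofReal B) :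
    B ^ (-(1:ℝ)/2) * (3 * (Real.exp (2 * lam * T / 3) - 1) / (2 * lam)) ^ ((3:ℝ)/2) ≤
      ∫ t in (0:ℝ)..T, Real.exp (lam * (T - t)) * w t := by
  have hexp : ∀ t, Real.exp (lam * (T - t)) ^ (2/3 : ℝ) = Real.exp (2 * lam / 3 * (T - t)) := by
    intro t
    rw [← Real.exp_mul]
    ring_nf
  have hweight : ∫ t in Icc 0 T, Real.exp (lam * (T - t)) ^ (2/3 : ℝ) =
      3 * (Real.exp (2 * lam * T / 3) - 1) / (2 * lam) := by
    rw [integral_Icc_eq_integral_Ioc, ← intervalIntegral.integral_of_le hT.le]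
    simp only [hexp]
    rw [integral_exp_mul_sub (div_ne_zero (mul_ne_zero two_ne_zero hlam) three_ne_zero)]
    field_simp
  rw [← hweight, intervalIntegral.integral_of_le hT.le, ← integral_Icc_eq_integral_Ioc]
  refine rpow_le_integral_mul_of_lintegral_inv_sq_le hmeas
    (ae_of_all _ fun t => (Real.exp_pos _).le) hpos ?_ hint hB hbudget
  exact Continuous.integrableOn_Icc (by fun_prop (disch := norm_num))
end

section
/- Let T > 0, B > 0, and let ρ : [0,T] → ℝ be measurable with ρ(t) > 0 almost everywhere and ∫₀ᵀ ρ(t)^{1/2} dt finite and positive. Then the infimum, over all measurable w : [0,T] → ℝ with w(t) > 0 almost everywhere and ∫₀ᵀ w(t)^{−2} dt ≤ B, of the loss ∫₀ᵀ w(t)²·ρ(t) dt, equals (∫₀ᵀ ρ(s)^{1/2} ds)² / B, and it is attained at w*(t) = ( (∫₀ᵀ ρ(s)^{1/2} ds) / B )^{1/2} · ρ(t)^{−1/4}. -/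
/-!
By Cauchy–Schwarz applied to `w √ρ` and `w⁻¹`,
`(∫ √ρ)² ≤ (∫ w² ρ) (∫ w⁻²) ≤ B · (∫ w² ρ)`, so no admissible weight beats `(∫ √ρ)² / B`.
Equality in Cauchy–Schwarz forces `w √ρ ∝ w⁻¹`, i.e. `w ∝ ρ^{-1/4}`, and spending the
whole budget fixes the constant `c = (∫ √ρ) / B` in `w² = c ρ^{-1/2}`.
-/

open MeasureTheory Set ENNReal

theorem ENNReal.sq_lintegral_mul_le {α : Type*} [MeasurableSpace α] (μ : Measure α)
    {f g : α → ℝ≥0∞} (hf : AEMeasurable f μ) (hg : AEMeasurable g μ) :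
    (∫⁻ a, f a * g a ∂μ) ^ 2 ≤ (∫⁻ a, f a ^ 2 ∂μ) * ∫⁻ a, g a ^ 2 ∂μ := by
  have hHolder := ENNReal.lintegral_mul_le_Lp_mul_Lq μ .two_two hf hg
  simp only [Pi.mul_apply, ENNReal.rpow_two] at hHolder
  calc (∫⁻ a, f a * g a ∂μ) ^ 2
      ≤ ((∫⁻ a, f a ^ 2 ∂μ) ^ (1 / 2 : ℝ) * (∫⁻ a, g a ^ 2 ∂μ) ^ (1 / 2 : ℝ)) ^ 2 := by
        gcongr
    _ = (∫⁻ a, f a ^ 2 ∂μ) * ∫⁻ a, g a ^ 2 ∂μ := by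
      rw [mul_pow, ← ENNReal.rpow_natCast, ← ENNReal.rpow_natCast, ← ENNReal.rpow_mul,
        ← ENNReal.rpow_mul]
      norm_num

section WeightedLoss

variable {α : Type*} {ρ : α → ℝ}

/-- The minimiser `w*` of the theorem is `optimalWeight ((∫₀ᵀ √ρ) / B) ρ`. -/
noncomputable def optimalWeight (c : ℝ) (ρ : α → ℝ) (a : α) : ℝ :=
  c ^ (1 / 2 : ℝ) * ρ a ^ (-(1 : ℝ) / 4)

theorem optimalWeight_pos {c : ℝ} {a : α} (hc : 0 < c) (hρa : 0 < ρ a) :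
    0 < optimalWeight c ρ a := by
  unfold optimalWeight; positivity

theorem optimalWeight_sq {c : ℝ} {a : α} (hc : 0 ≤ c) (hρa : 0 ≤ ρ a) :
    optimalWeight c ρ a ^ 2 = c * ρ a ^ (-(1 : ℝ) / 2) := by
  rw [optimalWeight, mul_pow, ← Real.rpow_natCast, ← Real.rpow_natCast (ρ a ^ _),
    ← Real.rpow_mul hc, ← Real.rpow_mul hρa]
  norm_num

theorem optimalWeight_sq_mul {c : ℝ} {a : α} (hc : 0 ≤ c) (hρa : 0 < ρ a) :
    optimalWeight c ρ a ^ 2 * ρ a = c * ρ a ^ (1 / 2 : ℝ) := by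
  rw [optimalWeight_sq hc hρa.le, mul_assoc, ← Real.rpow_add_one hρa.ne']
  norm_num

theorem inv_optimalWeight_sq {c : ℝ} {a : α} (hc : 0 ≤ c) (hρa : 0 < ρ a) :
    (optimalWeight c ρ a ^ 2)⁻¹ = c⁻¹ * ρ a ^ (1 / 2 : ℝ) := by
  rw [optimalWeight_sq hc hρa.le, mul_inv, neg_div, Real.rpow_neg hρa.le, inv_inv]

variable [MeasurableSpace α] {μ : Measure α}

theorem Measurable.optimalWeight (c : ℝ) (hρ : Measurable ρ) :
    Measurable (optimalWeight c ρ) :=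
  measurable_const.mul (hρ.pow_const _)

theorem lintegral_optimalWeight_sq_mul {c : ℝ} (hc : 0 ≤ c) (hρpos : ∀ᵐ a ∂μ, 0 < ρ a) :
    ∫⁻ a, ENNReal.ofReal (optimalWeight c ρ a ^ 2 * ρ a) ∂μ =
      ENNReal.ofReal c * ∫⁻ a, ENNReal.ofReal (ρ a ^ (1 / 2 : ℝ)) ∂μ := by
  rw [← lintegral_const_mul' _ _ ofReal_ne_top]
  refine lintegral_congr_ae ?_
  filter_upwards [hρpos] with a hρa
  rw [optimalWeight_sq_mul hc hρa, ENNReal.ofReal_mul hc]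

theorem lintegral_inv_optimalWeight_sq {c : ℝ} (hc : 0 ≤ c) (hρpos : ∀ᵐ a ∂μ, 0 < ρ a) :
    ∫⁻ a, ENNReal.ofReal ((optimalWeight c ρ a ^ 2)⁻¹) ∂μ =
      ENNReal.ofReal c⁻¹ * ∫⁻ a, ENNReal.ofReal (ρ a ^ (1 / 2 : ℝ)) ∂μ := by
  rw [← lintegral_const_mul' _ _ ofReal_ne_top]
  refine lintegral_congr_ae ?_
  filter_upwards [hρpos] with a hρa
  rw [inv_optimalWeight_sq hc hρa, ENNReal.ofReal_mul (inv_nonneg.2 hc)]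

theorem sq_lintegral_rpow_half_le_loss_mul_budget {w : α → ℝ} (hw : AEMeasurable w μ)
    (hρ : AEMeasurable ρ μ) (hwpos : ∀ᵐ a ∂μ, 0 < w a) (hρnn : ∀ᵐ a ∂μ, 0 ≤ ρ a) :
    (∫⁻ a, ENNReal.ofReal (ρ a ^ (1 / 2 : ℝ)) ∂μ) ^ 2 ≤
      (∫⁻ a, ENNReal.ofReal (w a ^ 2 * ρ a) ∂μ) * ∫⁻ a, ENNReal.ofReal ((w a ^ 2)⁻¹) ∂μ := by
  have hCS := ENNReal.sq_lintegral_mul_le μ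
    (f := fun a => ENNReal.ofReal (w a * ρ a ^ (1 / 2 : ℝ)))
    (g := fun a => ENNReal.ofReal (w a)⁻¹)
    (hw.mul (hρ.pow_const _)).ennreal_ofReal hw.inv.ennreal_ofReal
  convert hCS using 2
  · refine lintegral_congr_ae ?_
    filter_upwards [hwpos, hρnn] with a hwa hρa
    rw [← ENNReal.ofReal_mul (mul_nonneg hwa.le (Real.rpow_nonneg hρa _)), mul_comm,
      inv_mul_cancel_left₀ hwa.ne']
  · refine lintegral_congr_ae ?_
    filter_upwards [hwpos, hρnn] with a hwa hρa
    rw [← ENNReal.ofReal_pow (mul_nonneg hwa.le (Real.rpow_nonneg hρa _)), mul_pow,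
      ← Real.sqrt_eq_rpow, Real.sq_sqrt hρa]
  · refine lintegral_congr_ae ?_
    filter_upwards [hwpos] with a hwa
    rw [← ENNReal.ofReal_pow (inv_nonneg.2 hwa.le), inv_pow]

end WeightedLoss

/-- For a sampling density `ρ > 0` a.e. with `∫₀ᵀ ρ^{1/2}` finite and
positive, the infimum of the loss `∫₀ᵀ w² ρ` (Lebesgue lower integral) over measurable
a.e.-positive `w` with budget `∫₀ᵀ w⁻² ≤ B` equals `(∫₀ᵀ ρ^{1/2})²/B`, attained at
`w* t = ((∫₀ᵀ ρ^{1/2})/B)^{1/2} ρ t^{−1/4}`. -/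
theorem stmt_9 (T B : ℝ) (hT : 0 < T) (hB : 0 < B) (ρ : ℝ → ℝ) (hρ : Measurable ρ)
    (hρpos : ∀ᵐ t ∂(volume.restrict (Icc (0:ℝ) T)), 0 < ρ t)
    (hint : IntegrableOn (fun t => ρ t ^ ((1:ℝ)/2)) (Icc 0 T))
    (hpos : 0 < ∫ s in (0:ℝ)..T, ρ s ^ ((1:ℝ)/2)) :
    IsLeast {y : ℝ≥0∞ | ∃ w : ℝ → ℝ, Measurable w ∧
        (∀ᵐ t ∂(volume.restrict (Icc (0:ℝ) T)), 0 < w t) ∧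
        (∫⁻ t in Icc (0:ℝ) T, ENNReal.ofReal ((w t ^ 2)⁻¹)) ≤ ENNReal.ofReal B ∧
        y = ∫⁻ t in Icc (0:ℝ) T, ENNReal.ofReal (w t ^ 2 * ρ t)}
      (ENNReal.ofReal ((∫ s in (0:ℝ)..T, ρ s ^ ((1:ℝ)/2)) ^ 2 / B)) ∧
    ∀ w : ℝ → ℝ,
      (∀ t, w t = ((∫ s in (0:ℝ)..T, ρ s ^ ((1:ℝ)/2)) / B) ^ ((1:ℝ)/2) * ρ t ^ (-(1:ℝ)/4)) →
      ((∫⁻ t in Icc (0:ℝ) T, ENNReal.ofReal ((w t ^ 2)⁻¹)) ≤ ENNReal.ofReal B ∧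
        (∫⁻ t in Icc (0:ℝ) T, ENNReal.ofReal (w t ^ 2 * ρ t)) =
          ENNReal.ofReal ((∫ s in (0:ℝ)..T, ρ s ^ ((1:ℝ)/2)) ^ 2 / B)) := by
  set I := ∫ s in (0:ℝ)..T, ρ s ^ ((1:ℝ)/2)
  have hρnn : ∀ᵐ t ∂(volume.restrict (Icc (0:ℝ) T)), 0 ≤ ρ t := hρpos.mono fun _ h => h.le
  have hI : ∫⁻ t in Icc (0:ℝ) T, ENNReal.ofReal (ρ t ^ (1 / 2 : ℝ)) = ENNReal.ofReal I := by
    rw [← ofReal_integral_eq_lintegral_ofReal hint (hρnn.mono fun _ h => Real.rpow_nonneg h _),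
      integral_Icc_eq_integral_Ioc, ← intervalIntegral.integral_of_le hT.le]
  have hc : 0 < I / B := div_pos hpos hB
  have hbudget : ∫⁻ t in Icc (0:ℝ) T, ENNReal.ofReal ((optimalWeight (I / B) ρ t ^ 2)⁻¹) =
      ENNReal.ofReal B := by
    rw [lintegral_inv_optimalWeight_sq hc.le hρpos, hI, ← ofReal_mul (by positivity), inv_div,
      div_mul_cancel₀ _ hpos.ne']
  have hloss : ∫⁻ t in Icc (0:ℝ) T, ENNReal.ofReal (optimalWeight (I / B) ρ t ^ 2 * ρ t) =
      ENNReal.ofReal (I ^ 2 / B) := by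
    rw [lintegral_optimalWeight_sq_mul hc.le hρpos, hI, ← ofReal_mul hc.le]
    ring_nf
  refine ⟨⟨⟨optimalWeight (I / B) ρ, hρ.optimalWeight _,
    hρpos.mono fun _ h => optimalWeight_pos hc h, hbudget.le, hloss.symm⟩, ?_⟩, ?_⟩
  · rintro _ ⟨w, hw, hwpos, hwB, rfl⟩
    have hCS := sq_lintegral_rpow_half_le_loss_mul_budget hw.aemeasurable hρ.aemeasurable
      hwpos hρnn
    rw [hI] at hCS
    rw [ofReal_div_of_pos hB, ofReal_pow hpos.le]
    exact div_le_of_le_mul (hCS.trans (by gcongr))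
  · intro w hw
    obtain rfl : w = optimalWeight (I / B) ρ := funext hw
    exact ⟨hbudget.le, hloss⟩
end

section
/- Let λ ∈ ℝ with λ ≠ 0, T > 0, B > 0, and let ρ be the density of the truncated exponential distribution E^{0,T,4λ/3}, i.e., ρ(t) = (4λ/3)·e^{−(4λ/3)t}/(1 − e^{−(4λ/3)T}) for t ∈ [0,T]. Then the minimizer w*(t) = ( (∫₀ᵀ ρ(s)^{1/2} ds)/B )^{1/2} · ρ(t)^{−1/4} of the loss ∫₀ᵀ w(t)²ρ(t) dt under the constraint ∫₀ᵀ w(t)^{−2} dt ≤ B is proportional to e^{−λ(T−t)/3}, and it satisfies ∫₀ᵀ e^{λ(T−t)}·w*(t) dt = B^{−1/2}·( 3(e^{2λT/3} − 1)/(2λ) )^{3/2}. -/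
open MeasureTheory Set

lemma exp_int_aux (c a b : ℝ) (hc : c ≠ 0) :
    ∫ t in a..b, Real.exp (c * t) = (Real.exp (c * b) - Real.exp (c * a)) / c := by
  have h : ∀ t ∈ Set.uIcc a b, HasDerivAt (fun t => Real.exp (c * t) / c) (Real.exp (c * t)) t := by
    intro t _
    have h1 : HasDerivAt (fun t : ℝ => c * t) c t := by simpa using (hasDerivAt_id t).const_mul c
    have h2 := (Real.hasDerivAt_exp (c * t)).comp t h1
    have h3 := h2.div_const c
    simpa [mul_div_assoc, mul_div_cancel_right₀, hc] using h3
  have hint : IntervalIntegrable (fun t => Real.exp (c * t)) MeasureTheory.volume a b :=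
    (Real.continuous_exp.comp (continuous_const.mul continuous_id)).intervalIntegrable a b
  rw [intervalIntegral.integral_eq_sub_of_hasDerivAt h hint]
  ring

lemma pos_aux (c T : ℝ) (hc : c ≠ 0) (hT : 0 < T) : 0 < (1 - Real.exp (-(c * T))) / c := by
  rcases lt_or_gt_of_ne hc with h | h
  · apply div_pos_of_neg_of_neg
    · have : 1 < Real.exp (-(c * T)) := by
        rw [Real.one_lt_exp_iff]
        nlinarith
      linarith
    · exact h
  · apply div_pos _ h
    have : Real.exp (-(c * T)) < 1 := by
      rw [Real.exp_lt_one_iff]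
      nlinarith
    linarith


/-- (Substance of Proposition 2.) With `ρ` the density of the truncated
exponential law `E^{0,T,4λ/3}`, the budget-constrained loss minimizer
`w t = ((∫₀ᵀ ρ^{1/2})/B)^{1/2} ρ t^{−1/4}` is proportional to `e^{−λ(T−t)/3}` and satisfies
`∫₀ᵀ e^{λ(T−t)} w t dt = B^{−1/2} (3(e^{2λT/3}−1)/(2λ))^{3/2}`. -/
theorem stmt_10 (lam T B : ℝ) (hlam : lam ≠ 0) (hT : 0 < T) (hB : 0 < B)
    (ρ w : ℝ → ℝ)
    (hρ : ∀ t ∈ Icc (0:ℝ) T, ρ t =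
      (4 * lam / 3) * Real.exp (-(4 * lam / 3) * t) / (1 - Real.exp (-(4 * lam / 3) * T)))
    (hw : ∀ t ∈ Icc (0:ℝ) T, w t =
      ((∫ s in (0:ℝ)..T, ρ s ^ ((1:ℝ)/2)) / B) ^ ((1:ℝ)/2) * ρ t ^ (-(1:ℝ)/4)) :
    (∃ c : ℝ, 0 < c ∧ ∀ t ∈ Icc (0:ℝ) T, w t = c * Real.exp (-(lam * (T - t)) / 3)) ∧
    (∫ t in (0:ℝ)..T, Real.exp (lam * (T - t)) * w t) =
      B ^ (-(1:ℝ)/2) * (3 * (Real.exp (2 * lam * T / 3) - 1) / (2 * lam)) ^ ((3:ℝ)/2) := by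
  have huIcc : Set.uIcc (0:ℝ) T = Icc (0:ℝ) T := Set.uIcc_of_le hT.le
  set r : ℝ := 4 * lam / 3 with hr
  have hr0 : r ≠ 0 := by
    simp only [hr, div_ne_zero_iff]
    constructor
    · intro h; apply hlam; linarith
    · norm_num
  set K : ℝ := r / (1 - Real.exp (-r * T)) with hKdef
  have hK0 : 0 < K := by
    have := pos_aux r T hr0 hT
    rw [hKdef]
    rw [show -r * T = -(r * T) by ring]
    rw [show r / (1 - Real.exp (-(r*T))) = ((1 - Real.exp (-(r*T))) / r)⁻¹ by
      field_simp]
    exact inv_pos.mpr this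
  have hρ' : ∀ t ∈ Icc (0:ℝ) T, ρ t = K * Real.exp (-r * t) := by
    intro t ht
    rw [hρ t ht, hKdef]
    ring
  -- u and J
  set u : ℝ := Real.exp (-(2 * lam / 3) * T) with hu
  have hu0 : 0 < u := Real.exp_pos _
  set J : ℝ := (1 - u) / (2 * lam / 3) with hJ
  have hJ0 : 0 < J := by
    have h23 : (2 * lam / 3 : ℝ) ≠ 0 := by
      simp only [div_ne_zero_iff]
      constructor
      · intro h; apply hlam; linarith
      · norm_num
    have := pos_aux (2 * lam / 3) T h23 hT
    rw [hJ, hu]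
    rw [show -(2 * lam / 3) * T = -(2 * lam / 3 * T) by ring]
    exact this
  -- the square-root integral
  have hIval : (∫ s in (0:ℝ)..T, ρ s ^ ((1:ℝ)/2)) = K ^ ((1:ℝ)/2) * J := by
    have hcong : ∀ s ∈ Set.uIcc (0:ℝ) T,
        ρ s ^ ((1:ℝ)/2) = K ^ ((1:ℝ)/2) * Real.exp (-(2 * lam / 3) * s) := by
      intro s hs
      rw [huIcc] at hs
      rw [hρ' s hs, Real.mul_rpow hK0.le (Real.exp_pos _).le, ← Real.exp_mul]
      congr 1
      rw [hr]; ring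
    rw [intervalIntegral.integral_congr (g := fun s => K ^ ((1:ℝ)/2) * Real.exp (-(2 * lam / 3) * s)) (fun s hs => hcong s hs)]
    rw [intervalIntegral.integral_const_mul]
    have h23 : (-(2 * lam / 3) : ℝ) ≠ 0 := by
      simp only [neg_ne_zero, div_ne_zero_iff]
      constructor
      · intro h; apply hlam; linarith
      · norm_num
    rw [exp_int_aux _ _ _ h23]
    rw [hJ, hu]
    congr 1
    rw [show (-(2 * lam / 3)) * (0:ℝ) = 0 by ring, Real.exp_zero]
    field_simp
    ring
  set I : ℝ := K ^ ((1:ℝ)/2) * J with hI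
  have hI0 : 0 < I := mul_pos (Real.rpow_pos_of_pos hK0 _) hJ0
  -- the constant c
  set c0 : ℝ := (I / B) ^ ((1:ℝ)/2) * K ^ (-(1:ℝ)/4) * Real.exp (lam * T / 3) with hc0
  have hc00 : 0 < c0 := by
    apply mul_pos (mul_pos _ _) (Real.exp_pos _)
    · exact Real.rpow_pos_of_pos (div_pos hI0 hB) _
    · exact Real.rpow_pos_of_pos hK0 _
  have hw' : ∀ t ∈ Icc (0:ℝ) T, w t = c0 * Real.exp (-(lam * (T - t)) / 3) := by
    intro t ht
    rw [hw t ht, hIval, hρ' t ht, hc0]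
    rw [Real.mul_rpow hK0.le (Real.exp_pos _).le, ← Real.exp_mul]
    have he : Real.exp (-r * t * (-(1:ℝ)/4))
        = Real.exp (lam * T / 3) * Real.exp (-(lam * (T - t)) / 3) := by
      rw [← Real.exp_add]
      congr 1
      rw [hr]; ring
    rw [he]
    ring
  refine ⟨⟨c0, hc00, hw'⟩, ?_⟩
  -- the integral
  have hcong2 : ∀ t ∈ Set.uIcc (0:ℝ) T,
      Real.exp (lam * (T - t)) * w t
        = (c0 * Real.exp (2 * lam * T / 3)) * Real.exp (-(2 * lam / 3) * t) := by
    intro t ht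
    rw [huIcc] at ht
    rw [hw' t ht]
    rw [show Real.exp (lam * (T - t)) * (c0 * Real.exp (-(lam * (T - t)) / 3))
        = c0 * (Real.exp (lam * (T - t)) * Real.exp (-(lam * (T - t)) / 3)) by ring]
    rw [show c0 * Real.exp (2 * lam * T / 3) * Real.exp (-(2 * lam / 3) * t)
        = c0 * (Real.exp (2 * lam * T / 3) * Real.exp (-(2 * lam / 3) * t)) by ring]
    rw [← Real.exp_add, ← Real.exp_add]
    congr 2
    ring
  rw [intervalIntegral.integral_congr (fun t ht => hcong2 t ht),
    intervalIntegral.integral_const_mul]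
  have h23 : (-(2 * lam / 3) : ℝ) ≠ 0 := by
    simp only [neg_ne_zero, div_ne_zero_iff]
    constructor
    · intro h; apply hlam; linarith
    · norm_num
  rw [exp_int_aux _ _ _ h23]
  have hexpT : Real.exp (2 * lam * T / 3) = u⁻¹ := by
    rw [hu, ← Real.exp_neg]
    congr 1
    ring
  have hintval : (Real.exp (-(2 * lam / 3) * T) - Real.exp (-(2 * lam / 3) * 0)) / (-(2 * lam / 3)) = J := by
    rw [hJ, hu]
    rw [show (-(2 * lam / 3)) * (0:ℝ) = 0 by ring, Real.exp_zero]
    field_simp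
    ring
  rw [hintval, hexpT]
  -- now pure rpow algebra: c0 * u⁻¹ * J = B^{-1/2} * (J/u)^{3/2}
  have hM : 3 * (u⁻¹ - 1) / (2 * lam) = J / u := by
    rw [hJ]
    field_simp
  rw [show (3 * (u⁻¹ - 1) / (2 * lam)) = J / u from hM]
  -- expand c0
  have hexpT3 : Real.exp (lam * T / 3) = u ^ (-(1:ℝ)/2) := by
    rw [hu, ← Real.exp_mul]
    congr 1
    ring
  rw [hc0, hexpT3, hI]
  rw [Real.div_rpow (mul_pos (Real.rpow_pos_of_pos hK0 _) hJ0).le hB.le]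
  rw [Real.mul_rpow (Real.rpow_pos_of_pos hK0 _).le hJ0.le]
  have hKq : (K ^ ((1:ℝ)/2)) ^ ((1:ℝ)/2) = K ^ ((1:ℝ)/4) := by
    rw [← Real.rpow_mul hK0.le]; norm_num
  have hKneg : K ^ (-(1:ℝ)/4) = (K ^ ((1:ℝ)/4))⁻¹ := by
    rw [show (-(1:ℝ)/4) = -(1/4) by norm_num, Real.rpow_neg hK0.le]
  have hBneg : B ^ (-(1:ℝ)/2) = (B ^ ((1:ℝ)/2))⁻¹ := by
    rw [show (-(1:ℝ)/2) = -(1/2) by norm_num, Real.rpow_neg hB.le]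
  have huneg : u ^ (-(1:ℝ)/2) = (u ^ ((1:ℝ)/2))⁻¹ := by
    rw [show (-(1:ℝ)/2) = -(1/2) by norm_num, Real.rpow_neg hu0.le]
  have hdivJu : (J / u) ^ ((3:ℝ)/2) = (J ^ ((1:ℝ)/2) * J) / (u ^ ((1:ℝ)/2) * u) := by
    rw [Real.div_rpow hJ0.le hu0.le]
    rw [show ((3:ℝ)/2) = 1/2 + 1 by norm_num, Real.rpow_add hJ0, Real.rpow_add hu0,
      Real.rpow_one, Real.rpow_one]
  rw [hKq, hKneg, hBneg, huneg, hdivJu]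
  have h1 : K ^ ((1:ℝ)/4) ≠ 0 := (Real.rpow_pos_of_pos hK0 _).ne'
  have h2 : J ^ ((1:ℝ)/2) ≠ 0 := (Real.rpow_pos_of_pos hJ0 _).ne'
  have h3 : B ^ ((1:ℝ)/2) ≠ 0 := (Real.rpow_pos_of_pos hB _).ne'
  have h4 : u ^ ((1:ℝ)/2) ≠ 0 := (Real.rpow_pos_of_pos hu0 _).ne'
  field_simp
end

section
/- Let λ > 0, T > 0, B > 0. Define w(s) = c·(e^{λ(T−s)} − 1)^{−1/3}, where c > 0 is chosen so that ∫₀ᵀ w(s)^{−2} ds = B, namely c = ( (∫₀ᵀ (e^{λ(T−s)} − 1)^{2/3} ds)/B )^{1/2}. Then ∫₀ᵀ w(s)^{−2} ds = B and ∫₀ᵀ ((e^{λ(T−s)} − 1)/λ)·w(s) ds = B^{−1/2}·( ∫₀ᵀ ((e^{λ(T−s)} − 1)/λ)^{2/3} ds )^{3/2}. -/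
open MeasureTheory Set
/-- (Equality case for the integrated-error metric.) With
`w s = c (e^{λ(T−s)} − 1)^{−1/3}` and `c = ((∫₀ᵀ (e^{λ(T−s)} − 1)^{2/3} ds)/B)^{1/2}`,
the budget is saturated, `∫₀ᵀ w⁻² = B`, and the integrated error attains the bound
`∫₀ᵀ ((e^{λ(T−s)} − 1)/λ) w s ds = B^{−1/2} (∫₀ᵀ ((e^{λ(T−s)} − 1)/λ)^{2/3} ds)^{3/2}`. -/
theorem stmt_18 (lam T B : ℝ) (hlam : 0 < lam) (hT : 0 < T) (hB : 0 < B)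
    (c : ℝ)
    (hc : c = ((∫ s in (0:ℝ)..T, (Real.exp (lam * (T - s)) - 1) ^ ((2:ℝ)/3)) / B) ^ ((1:ℝ)/2))
    (w : ℝ → ℝ)
    (hw : ∀ s, w s = c * (Real.exp (lam * (T - s)) - 1) ^ (-(1:ℝ)/3)) :
    (∫ s in (0:ℝ)..T, (w s ^ 2)⁻¹) = B ∧
    (∫ s in (0:ℝ)..T, ((Real.exp (lam * (T - s)) - 1) / lam) * w s) =
      B ^ (-(1:ℝ)/2) *
        (∫ s in (0:ℝ)..T, ((Real.exp (lam * (T - s)) - 1) / lam) ^ ((2:ℝ)/3)) ^ ((3:ℝ)/2) := by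
  set I : ℝ := ∫ s in (0:ℝ)..T, (Real.exp (lam * (T - s)) - 1) ^ ((2:ℝ)/3) with hI
  have hcont : Continuous fun s : ℝ => (Real.exp (lam * (T - s)) - 1) ^ ((2:ℝ)/3) := by
    apply Continuous.rpow_const
    · exact (Real.continuous_exp.comp (by continuity)).sub continuous_const
    · intro x; right; positivity
  have hIpos : 0 < I := by
    rw [hI]
    apply intervalIntegral.intervalIntegral_pos_of_pos_on
    · exact hcont.intervalIntegrable 0 T
    · intro s hs
      have hx : (0:ℝ) < Real.exp (lam * (T - s)) - 1 := by
        have : (0:ℝ) < lam * (T - s) := by nlinarith [hs.1, hs.2]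
        nlinarith [Real.add_one_le_exp (lam * (T - s)),
          Real.exp_pos (lam * (T - s)), Real.exp_lt_exp.mpr (show (0:ℝ) < lam * (T-s) from this)]
      positivity
    · exact hT
  have hxnn : ∀ s ∈ Set.uIcc (0:ℝ) T, 0 ≤ Real.exp (lam * (T - s)) - 1 := by
    intro s hs
    rw [Set.uIcc_of_le hT.le] at hs
    have : (0:ℝ) ≤ lam * (T - s) := by nlinarith [hs.1, hs.2]
    nlinarith [Real.add_one_le_exp (lam * (T - s))]
  have hcpos : 0 < c := by
    rw [hc]
    exact Real.rpow_pos_of_pos (div_pos hIpos hB) _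
  have hc2 : c ^ 2 = I / B := by
    rw [hc, ← Real.rpow_natCast (((I/B) ^ ((1:ℝ)/2))) 2, ← Real.rpow_mul (by positivity)]
    norm_num
  constructor
  · have hcongr : ∀ s ∈ Set.uIcc (0:ℝ) T,
        ((w s) ^ 2)⁻¹ = (c ^ 2)⁻¹ * (Real.exp (lam * (T - s)) - 1) ^ ((2:ℝ)/3) := by
      intro s hs
      rcases (hxnn s hs).eq_or_lt with h0 | hx
      · rw [hw s, ← h0, Real.zero_rpow (by norm_num), Real.zero_rpow (by norm_num)]
        simp
      · rw [hw s, mul_pow,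
          ← Real.rpow_natCast ((Real.exp (lam * (T - s)) - 1) ^ (-(1:ℝ)/3)) 2,
          ← Real.rpow_mul hx.le, mul_inv, ← Real.rpow_neg hx.le]
        norm_num
    rw [intervalIntegral.integral_congr hcongr, intervalIntegral.integral_const_mul, ← hI, hc2]
    field_simp
  · have hcongr2 : ∀ s ∈ Set.uIcc (0:ℝ) T,
        ((Real.exp (lam * (T - s)) - 1) / lam) * w s =
          (c / lam) * (Real.exp (lam * (T - s)) - 1) ^ ((2:ℝ)/3) := by
      intro s hs
      rcases (hxnn s hs).eq_or_lt with h0 | hx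
      · rw [hw s, ← h0, Real.zero_rpow (by norm_num), Real.zero_rpow (by norm_num)]
        simp
      · rw [hw s]
        have key : (Real.exp (lam * (T - s)) - 1) *
            (Real.exp (lam * (T - s)) - 1) ^ (-(1:ℝ)/3) =
            (Real.exp (lam * (T - s)) - 1) ^ ((2:ℝ)/3) := by
          rw [show ((2:ℝ)/3) = 1 + (-(1:ℝ)/3) by norm_num, Real.rpow_add hx, Real.rpow_one]
        calc ((Real.exp (lam * (T - s)) - 1) / lam) *
              (c * (Real.exp (lam * (T - s)) - 1) ^ (-(1:ℝ)/3))
            = (c / lam) * ((Real.exp (lam * (T - s)) - 1) *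
              (Real.exp (lam * (T - s)) - 1) ^ (-(1:ℝ)/3)) := by ring
          _ = (c / lam) * (Real.exp (lam * (T - s)) - 1) ^ ((2:ℝ)/3) := by rw [key]
    have hlr : (0:ℝ) < lam ^ ((2:ℝ)/3) := Real.rpow_pos_of_pos hlam _
    have hcongr3 : ∀ s ∈ Set.uIcc (0:ℝ) T,
        ((Real.exp (lam * (T - s)) - 1) / lam) ^ ((2:ℝ)/3) =
          (lam ^ ((2:ℝ)/3))⁻¹ * (Real.exp (lam * (T - s)) - 1) ^ ((2:ℝ)/3) := by
      intro s hs
      rw [Real.div_rpow (hxnn s hs) hlam.le]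
      ring
    rw [intervalIntegral.integral_congr hcongr2, intervalIntegral.integral_const_mul,
      intervalIntegral.integral_congr hcongr3, intervalIntegral.integral_const_mul, ← hI]
    have e1 : ((lam ^ ((2:ℝ)/3))⁻¹ * I) ^ ((3:ℝ)/2) = lam⁻¹ * (I ^ ((1:ℝ)/2) * I) := by
      rw [Real.mul_rpow (by positivity) hIpos.le, Real.inv_rpow hlr.le,
        ← Real.rpow_mul hlam.le,
        show ((2:ℝ)/3 * ((3:ℝ)/2)) = (1:ℝ) by norm_num, Real.rpow_one,
        show ((3:ℝ)/2) = (1:ℝ)/2 + 1 by norm_num, Real.rpow_add hIpos, Real.rpow_one]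
    have e2 : c = I ^ ((1:ℝ)/2) / B ^ ((1:ℝ)/2) := by
      rw [hc, Real.div_rpow hIpos.le hB.le]
    have e3 : B ^ (-(1:ℝ)/2) = (B ^ ((1:ℝ)/2))⁻¹ := by
      rw [show (-(1:ℝ)/2) = -((1:ℝ)/2) by norm_num, Real.rpow_neg hB.le]
    have hB2 : (0:ℝ) < B ^ ((1:ℝ)/2) := Real.rpow_pos_of_pos hB _
    rw [e1, e2, e3]
    field_simp
end

section
/- Let λ > 0 and T > 0, and define ρ(t) = (e^{−λt} − e^{−λT})^{4/3} / ∫₀ᵀ (e^{−λs} − e^{−λT})^{4/3} ds for t ∈ [0,T]. Then ρ is a probability density on [0,T], and ρ is proportional to w*(t)^{−4} where w*(t) = (e^{λ(T−t)} − 1)^{−1/3}; consequently, for this ρ, the budget-constrained loss minimizer w(t) = ( (∫₀ᵀ ρ(s)^{1/2} ds)/B )^{1/2}·ρ(t)^{−1/4} (B > 0) is proportional to (e^{λ(T−t)} − 1)^{−1/3} and satisfies ∫₀ᵀ ((e^{λ(T−t)} − 1)/λ)·w(t) dt = B^{−1/2}·( ∫₀ᵀ ((e^{λ(T−t)} − 1)/λ)^{2/3}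 dt )^{3/2}. -/
open MeasureTheory Set

/-- (Substance of Proposition 3.) The density
`ρ t = (e^{−λt} − e^{−λT})^{4/3} / ∫₀ᵀ (e^{−λs} − e^{−λT})^{4/3} ds` is a probability
density on `[0,T]`, is proportional to `(w* t)⁻⁴` with `w* t = (e^{λ(T−t)} − 1)^{−1/3}`,
and the budget-constrained loss minimizer `w t = ((∫₀ᵀ ρ^{1/2})/B)^{1/2} ρ t^{−1/4}` is
proportional to `(e^{λ(T−t)} − 1)^{−1/3}` and attains the minimal integrated error
`∫₀ᵀ ((e^{λ(T−t)} − 1)/λ) w t dt = B^{−1/2} (∫₀ᵀ ((e^{λ(T−t)} − 1)/λ)^{2/3} dt)^{3/2}`. -/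
theorem stmt_19 (lam T B : ℝ) (hlam : 0 < lam) (hT : 0 < T) (hB : 0 < B)
    (ρ wstar w : ℝ → ℝ)
    (hρ : ∀ t, ρ t = (Real.exp (-lam * t) - Real.exp (-lam * T)) ^ ((4:ℝ)/3) /
        ∫ s in (0:ℝ)..T, (Real.exp (-lam * s) - Real.exp (-lam * T)) ^ ((4:ℝ)/3))
    (hwstar : ∀ t, wstar t = (Real.exp (lam * (T - t)) - 1) ^ (-(1:ℝ)/3))
    (hw : ∀ t, w t =
      ((∫ s in (0:ℝ)..T, ρ s ^ ((1:ℝ)/2)) / B) ^ ((1:ℝ)/2) * ρ t ^ (-(1:ℝ)/4)) :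
    (∀ t ∈ Icc (0:ℝ) T, 0 ≤ ρ t) ∧
    (∫ t in (0:ℝ)..T, ρ t) = 1 ∧
    (∃ c : ℝ, 0 < c ∧ ∀ t ∈ Icc (0:ℝ) T, ρ t = c * (wstar t ^ 4)⁻¹) ∧
    (∃ c : ℝ, 0 < c ∧ ∀ t ∈ Icc (0:ℝ) T,
      w t = c * (Real.exp (lam * (T - t)) - 1) ^ (-(1:ℝ)/3)) ∧
    (∫ t in (0:ℝ)..T, ((Real.exp (lam * (T - t)) - 1) / lam) * w t) =
      B ^ (-(1:ℝ)/2) *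
        (∫ t in (0:ℝ)..T, ((Real.exp (lam * (T - t)) - 1) / lam) ^ ((2:ℝ)/3)) ^ ((3:ℝ)/2) := by
  have hTle : (0:ℝ) ≤ T := hT.le
  set E : ℝ := Real.exp (-lam * T) with hE
  have hEpos : 0 < E := Real.exp_pos _
  have hfa : ∀ t : ℝ, Real.exp (-lam * t) - E = E * (Real.exp (lam * (T - t)) - 1) := by
    intro t
    rw [mul_sub, mul_one, hE, ← Real.exp_add]
    ring_nf
  have ha_nonneg : ∀ t ∈ Icc (0:ℝ) T, 0 ≤ Real.exp (lam * (T - t)) - 1 := by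
    intro t ht
    have h1 : (0:ℝ) ≤ lam * (T - t) := mul_nonneg hlam.le (by linarith [ht.2])
    have h2 : Real.exp 0 ≤ Real.exp (lam * (T - t)) := Real.exp_le_exp.mpr h1
    rw [Real.exp_zero] at h2; linarith
  have ha_pos : ∀ t ∈ Ioo (0:ℝ) T, 0 < Real.exp (lam * (T - t)) - 1 := by
    intro t ht
    have h1 : (0:ℝ) < lam * (T - t) := mul_pos hlam (by linarith [ht.2])
    have h2 : Real.exp 0 < Real.exp (lam * (T - t)) := Real.exp_lt_exp.mpr h1
    rw [Real.exp_zero] at h2; linarith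
  have hf_nonneg : ∀ t ∈ Icc (0:ℝ) T, 0 ≤ Real.exp (-lam * t) - E := by
    intro t ht; rw [hfa t]; exact mul_nonneg hEpos.le (ha_nonneg t ht)
  have hcont_a : Continuous fun t : ℝ => Real.exp (lam * (T - t)) - 1 := by
    fun_prop
  have hcont_f : Continuous fun t : ℝ => Real.exp (-lam * t) - E := by
    fun_prop
  set I : ℝ := ∫ s in (0:ℝ)..T, (Real.exp (-lam * s) - E) ^ ((4:ℝ)/3) with hIdef
  have hIpos : 0 < I := by
    rw [hIdef]
    apply intervalIntegral.intervalIntegral_pos_of_pos_on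
    · exact (hcont_f.rpow_const (fun x => Or.inr (by norm_num))).intervalIntegrable 0 T
    · intro x hx
      have := ha_pos x hx
      have hfx : 0 < Real.exp (-lam * x) - E := by
        rw [hfa x]; exact mul_pos hEpos this
      exact Real.rpow_pos_of_pos hfx _
    · exact hT
  set J : ℝ := ∫ t in (0:ℝ)..T, (Real.exp (lam * (T - t)) - 1) ^ ((2:ℝ)/3) with hJdef
  have hJpos : 0 < J := by
    rw [hJdef]
    apply intervalIntegral.intervalIntegral_pos_of_pos_on
    · exact (hcont_a.rpow_const (fun x => Or.inr (by norm_num))).intervalIntegrable 0 T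
    · exact fun x hx => Real.rpow_pos_of_pos (ha_pos x hx) _
    · exact hT
  have hJnn : (0:ℝ) ≤ J := hJpos.le
  -- value of S = ∫ ρ^{1/2}
  have hSval : (∫ s in (0:ℝ)..T, ρ s ^ ((1:ℝ)/2))
      = E ^ ((2:ℝ)/3) / I ^ ((1:ℝ)/2) * J := by
    rw [show (∫ s in (0:ℝ)..T, ρ s ^ ((1:ℝ)/2))
        = ∫ s in (0:ℝ)..T, (E ^ ((2:ℝ)/3) / I ^ ((1:ℝ)/2)) *
            (Real.exp (lam * (T - s)) - 1) ^ ((2:ℝ)/3) from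
      intervalIntegral.integral_congr ?_]
    · rw [intervalIntegral.integral_const_mul, ← hJdef]
    · rw [uIcc_of_le hTle]
      intro s hs
      have hat := ha_nonneg s hs
      have hfnn := hf_nonneg s hs
      simp only
      rw [hρ s, Real.div_rpow (Real.rpow_nonneg hfnn _) hIpos.le,
        ← Real.rpow_mul hfnn, show ((4:ℝ)/3 * ((1:ℝ)/2)) = (2:ℝ)/3 by norm_num,
        hfa s, Real.mul_rpow hEpos.le hat]
      ring
  -- pointwise value of ρ^{-1/4}
  have hρ14 : ∀ t ∈ Icc (0:ℝ) T, ρ t ^ (-(1:ℝ)/4)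
      = (I ^ ((1:ℝ)/4) * E ^ (-(1:ℝ)/3)) * (Real.exp (lam * (T - t)) - 1) ^ (-(1:ℝ)/3) := by
    intro t ht
    have hat := ha_nonneg t ht
    have hfnn := hf_nonneg t ht
    rw [hρ t, Real.div_rpow (Real.rpow_nonneg hfnn _) hIpos.le,
      ← Real.rpow_mul hfnn, show ((4:ℝ)/3 * (-(1:ℝ)/4)) = -(1:ℝ)/3 by norm_num,
      hfa t, Real.mul_rpow hEpos.le hat,
      show (-(1:ℝ)/4) = -((1:ℝ)/4) by norm_num, Real.rpow_neg hIpos.le, div_eq_mul_inv, inv_inv]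
    ring
  -- the coefficient identity
  set c4 : ℝ := B ^ (-(1:ℝ)/2) * J ^ ((1:ℝ)/2) with hc4def
  have hc4pos : 0 < c4 := mul_pos (Real.rpow_pos_of_pos hB _) (Real.rpow_pos_of_pos hJpos _)
  have hK : ((∫ s in (0:ℝ)..T, ρ s ^ ((1:ℝ)/2)) / B) ^ ((1:ℝ)/2)
      * (I ^ ((1:ℝ)/4) * E ^ (-(1:ℝ)/3)) = c4 := by
    rw [hSval, hc4def]
    have hE23 : (0:ℝ) < E ^ ((2:ℝ)/3) := Real.rpow_pos_of_pos hEpos _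
    have hI12 : (0:ℝ) < I ^ ((1:ℝ)/2) := Real.rpow_pos_of_pos hIpos _
    rw [Real.div_rpow (mul_nonneg (div_nonneg hE23.le hI12.le) hJnn) hB.le,
      Real.mul_rpow (div_nonneg hE23.le hI12.le) hJnn,
      Real.div_rpow hE23.le hI12.le,
      ← Real.rpow_mul hEpos.le, ← Real.rpow_mul hIpos.le,
      show ((2:ℝ)/3 * ((1:ℝ)/2)) = (1:ℝ)/3 by norm_num,
      show ((1:ℝ)/2 * ((1:ℝ)/2)) = (1:ℝ)/4 by norm_num,
      show (-(1:ℝ)/3) = -((1:ℝ)/3) by norm_num,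
      show (-(1:ℝ)/2) = -((1:ℝ)/2) by norm_num,
      Real.rpow_neg hEpos.le, Real.rpow_neg hB.le]
    have h1 : (E : ℝ) ^ ((1:ℝ)/3) ≠ 0 := (Real.rpow_pos_of_pos hEpos _).ne'
    have h2 : (I : ℝ) ^ ((1:ℝ)/4) ≠ 0 := (Real.rpow_pos_of_pos hIpos _).ne'
    have h3 : (B : ℝ) ^ ((1:ℝ)/2) ≠ 0 := (Real.rpow_pos_of_pos hB _).ne'
    field_simp
  have hwIcc : ∀ t ∈ Icc (0:ℝ) T,
      w t = c4 * (Real.exp (lam * (T - t)) - 1) ^ (-(1:ℝ)/3) := by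
    intro t ht
    rw [hw t, hρ14 t ht, ← mul_assoc, hK]
  refine ⟨?_, ?_, ?_, ⟨c4, hc4pos, hwIcc⟩, ?_⟩
  · -- nonnegativity
    intro t ht
    rw [hρ t]
    exact div_nonneg (Real.rpow_nonneg (hf_nonneg t ht) _) hIpos.le
  · -- integrates to 1
    simp only [hρ]
    rw [intervalIntegral.integral_div, ← hIdef, div_self hIpos.ne']
  · -- proportional to wstar⁻⁴
    refine ⟨E ^ ((4:ℝ)/3) / I, div_pos (Real.rpow_pos_of_pos hEpos _) hIpos, ?_⟩
    intro t ht
    have hat := ha_nonneg t ht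
    rw [hρ t, hwstar t, hfa t, Real.mul_rpow hEpos.le hat]
    have h4 : (((Real.exp (lam * (T - t)) - 1) ^ (-(1:ℝ)/3)) ^ (4:ℕ))⁻¹
        = (Real.exp (lam * (T - t)) - 1) ^ ((4:ℝ)/3) := by
      rw [← Real.rpow_natCast ((Real.exp (lam * (T - t)) - 1) ^ (-(1:ℝ)/3)) 4,
        ← Real.rpow_mul hat,
        show (-(1:ℝ)/3 * ((4:ℕ):ℝ)) = -((4:ℝ)/3) by push_cast; ring,
        Real.rpow_neg hat, inv_inv]
    rw [h4]
    ring
  · -- the integral identity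
    rw [show (∫ t in (0:ℝ)..T, ((Real.exp (lam * (T - t)) - 1) / lam) * w t)
        = ∫ t in (0:ℝ)..T, (c4 / lam) * (Real.exp (lam * (T - t)) - 1) ^ ((2:ℝ)/3) from
      intervalIntegral.integral_congr ?_,
      show (∫ t in (0:ℝ)..T, ((Real.exp (lam * (T - t)) - 1) / lam) ^ ((2:ℝ)/3))
        = ∫ t in (0:ℝ)..T, (Real.exp (lam * (T - t)) - 1) ^ ((2:ℝ)/3) / lam ^ ((2:ℝ)/3) from
      intervalIntegral.integral_congr ?_]
    · rw [intervalIntegral.integral_const_mul, intervalIntegral.integral_div, ← hJdef,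
        Real.div_rpow hJnn (Real.rpow_nonneg hlam.le _),
        ← Real.rpow_mul hlam.le, show ((2:ℝ)/3 * ((3:ℝ)/2)) = (1:ℝ) by norm_num,
        Real.rpow_one,
        show ((3:ℝ)/2) = (1:ℝ)/2 + 1 by norm_num,
        Real.rpow_add' hJnn (by norm_num), Real.rpow_one, hc4def]
      ring
    · rw [uIcc_of_le hTle]
      intro t ht
      simp only
      rw [Real.div_rpow (ha_nonneg t ht) hlam.le]
    · rw [uIcc_of_le hTle]
      intro t ht
      simp only
      rw [hwIcc t ht,
        show ((2:ℝ)/3) = (1:ℝ) + -(1:ℝ)/3 by norm_num,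
        Real.rpow_add' (ha_nonneg t ht) (by norm_num), Real.rpow_one]
      ring
end
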